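/- arXiv:2107.07171 — 2 statements merged into one kernel-verified Lean document; each statement's English description precedes it below -/
import Mathlib

section
/- Let A ∈ ℝ^{m×m} and B ∈ ℝ^{n×n}, and let P(u,v) = Σ_{i=0}^{p} Σ_{j=0}^{q} c_{ij} u^i v^j be a polynomial in two variables. Define P(A,B) = Σ_{i,j} c_{ij} (A^i ⊗ B^j). If {λ_i}_{i=1}^m and {θ_j}_{j=1}^n are the eigenvalues of A and B (over ℂ, with multiplicity), then the eigenvalues of P(A,B) are exactly P(λ_i, θ_j) for i = 1,…,m, j = 1,…,n. -/
/-!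
Schur triangularization writes `A = U⁻¹ T U` and `B = V⁻¹ S V` with `T`, `S` upper triangular,
their diagonals listing the eigenvalues `λᵢ` and `θⱼ`. Conjugation by `U ⊗ V` carries `P(A, B)`
to `P(T, S)`, which is triangular for the lexicographic order on index pairs and has diagonal
entries `P(Tᵢᵢ, Sⱼⱼ)`; the characteristic polynomial of a triangular matrix is read off its
diagonal.
-/

open Matrix Kronecker Polynomial

theorem Multiset.map_product_map {α β γ δ : Type*} (s : Multiset α) (t : Multiset β)
    (f : α → γ) (g : β → δ) : s.map f ×ˢ t.map g = (s ×ˢ t).map (Prod.map f g) := by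
  induction s using Multiset.induction with
  | empty => simp
  | cons a s ih => simp [Multiset.cons_product, ih, Multiset.map_map]

theorem Finset.univ_val_map_prod_congr {m n α β γ : Type*} [Fintype m] [Fintype n]
    {d d' : m → α} {e e' : n → β} (f : α → β → γ)
    (hd : univ.val.map d = univ.val.map d') (he : univ.val.map e = univ.val.map e') :
    univ.val.map (fun ij : m × n => f (d ij.1) (e ij.2)) =
      univ.val.map (fun ij : m × n => f (d' ij.1) (e' ij.2)) := by
  have key : ∀ (d : m → α) (e : n → β), univ.val.map (fun ij : m × n => f (d ij.1) (e ij.2)) =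
      (univ.val.map d ×ˢ univ.val.map e).map fun xy => f xy.1 xy.2 := by
    intro d e
    rw [Multiset.map_product_map, Multiset.map_map, ← product_val, univ_product_univ]
    rfl
  rw [key, key, hd, he]

def bivariateEval {R : Type*} [CommSemiring R] {p q : ℕ} (c : Fin (p + 1) → Fin (q + 1) → R)
    (x y : R) : R :=
  ∑ i : Fin (p + 1), ∑ j : Fin (q + 1), c i j * x ^ (i : ℕ) * y ^ (j : ℕ)

namespace Matrix

variable {m n R : Type*}

section Triangular

theorem IsUpperTriangular.mul_apply_self [Fintype m] [LinearOrder m]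
    [NonUnitalNonAssocSemiring R] {M N : Matrix m m R}
    (hM : M.IsUpperTriangular) (hN : N.IsUpperTriangular) (i : m) :
    (M * N) i i = M i i * N i i := by
  rw [mul_apply, Finset.sum_eq_single i (fun k _ hki => ?_) (by simp)]
  rcases hki.lt_or_gt with h | h
  · rw [hM h, zero_mul]
  · rw [hN h, mul_zero]

theorem IsUpperTriangular.pow_apply_self [Fintype m] [DecidableEq m] [LinearOrder m] [Semiring R]
    {M : Matrix m m R} (hM : M.IsUpperTriangular) (i : m) (k : ℕ) :
    (M ^ k) i i = M i i ^ k := by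
  induction k with
  | zero => simp
  | succ k ih => rw [pow_succ, IsUpperTriangular.mul_apply_self (hM.pow k) hM, ih, pow_succ]

theorem IsUpperTriangular.kronecker [LinearOrder m] [LinearOrder n] [MulZeroClass R]
    {A : Matrix m m R} {B : Matrix n n R} (hA : A.IsUpperTriangular) (hB : B.IsUpperTriangular) :
    (A ⊗ₖ B).BlockTriangular toLex := by
  rintro ⟨i, i'⟩ ⟨j, j'⟩ h
  obtain h | ⟨-, h⟩ := Prod.Lex.lt_iff.mp h
  · exact mul_eq_zero_of_left (hA h) _
  · exact mul_eq_zero_of_right _ (hB h)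

theorem BlockTriangular.fromBlocks_zero₂₁ {α : Type*} [Preorder α] [Zero R]
    {A : Matrix m m R} {B : Matrix m n R} {D : Matrix n n R} {b : m ⊕ n → α}
    (hA : A.BlockTriangular (b ∘ Sum.inl)) (hD : D.BlockTriangular (b ∘ Sum.inr))
    (hb : ∀ i j, b (Sum.inl i) ≤ b (Sum.inr j)) :
    (fromBlocks A B 0 D).BlockTriangular b := by
  rintro (i | i) (j | j) h
  · exact hA h
  · exact absurd h (hb i j).not_gt
  · rfl
  · exact hD h

variable [Fintype m] [DecidableEq m] [CommRing R]

theorem BlockTriangular.charpoly_of_injective {α : Type*} [LinearOrder α] {b : m → α}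
    {M : Matrix m m R} (hM : M.BlockTriangular b) (hb : Function.Injective b) :
    M.charpoly = ∏ i, (X - C (M i i)) := by
  rw [BlockTriangular.charpoly _ hM, Finset.prod_image fun x _ y _ hxy => hb hxy]
  refine Finset.prod_congr rfl fun i _ => ?_
  let _ : Unique {j // b j = b i} := ⟨⟨⟨i, rfl⟩⟩, fun j => Subtype.ext (hb j.2)⟩
  rw [Matrix.charpoly, det_unique, charmatrix_apply_eq]
  rfl

theorem BlockTriangular.roots_charpoly_of_injective [IsDomain R] {α : Type*} [LinearOrder α]
    {b : m → α} {M : Matrix m m R} (hM : M.BlockTriangular b) (hb : Function.Injective b) :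
    M.charpoly.roots = Finset.univ.val.map fun i => M i i := by
  rw [hM.charpoly_of_injective hb, Finset.prod_eq_multiset_prod,
    ← roots_multiset_prod_X_sub_C (Finset.univ.val.map fun i => M i i), Multiset.map_map]
  rfl

theorem charpoly_mul_mul_of_mul_eq_one {M P Q : Matrix m m R} (h : Q * P = 1) :
    (P * M * Q).charpoly = M.charpoly := by
  rw [charpoly_mul_comm, ← mul_assoc, h, one_mul]

theorem IsUpperTriangular.roots_charpoly_of_units_conj [LinearOrder m] [IsDomain R]
    {A : Matrix m m R} {U : (Matrix m m R)ˣ} (hU : (U * A * U⁻¹ : Matrix m m R).IsUpperTriangular) :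
    A.charpoly.roots = Finset.univ.val.map fun i => (U * A * U⁻¹ : Matrix m m R) i i := by
  rw [← hU.roots_charpoly_of_injective Function.injective_id,
    charpoly_mul_mul_of_mul_eq_one U.inv_mul]

end Triangular

theorem exists_units_conj_blockTriangular_of_toBlocks₂₁_eq_zero [Semiring R] {k l : ℕ}
    {C : Matrix (Fin k ⊕ Fin l) (Fin k ⊕ Fin l) R} (hC : C.toBlocks₂₁ = 0)
    {U : (Matrix (Fin k) (Fin k) R)ˣ} {V : (Matrix (Fin l) (Fin l) R)ˣ}
    (hU : (U * C.toBlocks₁₁ * U⁻¹ : Matrix (Fin k) (Fin k) R).IsUpperTriangular)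
    (hV : (V * C.toBlocks₂₂ * V⁻¹ : Matrix (Fin l) (Fin l) R).IsUpperTriangular) :
    ∃ W : (Matrix (Fin k ⊕ Fin l) (Fin k ⊕ Fin l) R)ˣ,
      (W * C * W⁻¹ : Matrix (Fin k ⊕ Fin l) (Fin k ⊕ Fin l) R).BlockTriangular finSumFinEquiv := by
  refine ⟨⟨fromBlocks U 0 0 V, fromBlocks ↑U⁻¹ 0 0 ↑V⁻¹, by simp [fromBlocks_multiply],
    by simp [fromBlocks_multiply]⟩, ?_⟩
  rw [← fromBlocks_toBlocks C, hC]
  simp only [fromBlocks_multiply, Units.val_mk, Units.inv_mk, Matrix.mul_zero, Matrix.zero_mul,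
    add_zero, zero_add]
  refine BlockTriangular.fromBlocks_zero₂₁ (fun i j h => hU h)
    (fun i j h => hV (by simpa using h)) fun i j => ?_
  exact Fin.le_iff_val_le_val.2 (by simp only [finSumFinEquiv_apply_left,
    finSumFinEquiv_apply_right, Fin.val_castAdd, Fin.val_natAdd]; omega)

section Schur

variable [Fintype n] [DecidableEq n] {K : Type*} [Field K]

theorem exists_isUnit_det_row_eq {v : n → K} (hv : v ≠ 0) (j : n) :
    ∃ V : Matrix n n K, IsUnit V.det ∧ V j = v := by
  obtain ⟨j₀, hj₀⟩ := Function.ne_iff.mp hv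
  refine ⟨((1 : Matrix n n K).updateRow j₀ v).submatrix (Equiv.swap j j₀) id, ?_, by ext; simp⟩
  rw [det_permute, ← cramer_transpose_apply, transpose_one, cramer_one]
  exact (Units.isUnit _).map (Int.castRingHom K) |>.mul (isUnit_iff_ne_zero.2 hj₀)

variable [IsAlgClosed K]

theorem exists_units_conj_row_eq_single (A : Matrix n n K) (j : n) :
    ∃ (U : (Matrix n n K)ˣ) (μ : K), (U * A * U⁻¹ : Matrix n n K) j = Pi.single j μ := by
  have : Nonempty n := ⟨j⟩
  -- a left eigenvector `w` of `A`, installed as row `j` of `V`, makes row `j` of `V A V⁻¹` be `μ eⱼ`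
  obtain ⟨μ, hμ⟩ := Module.End.exists_eigenvalue (toLin' Aᵀ)
  obtain ⟨w, hw⟩ := hμ.exists_hasEigenvector
  have hwA : w ᵥ* A = μ • w := by rw [← mulVec_transpose]; exact hw.apply_eq_smul
  obtain ⟨V, hV, hVj⟩ := exists_isUnit_det_row_eq hw.2 j
  refine ⟨nonsingInvUnit V hV, μ, ?_⟩
  have hVj' : Pi.single j 1 ᵥ* V = w := by rw [single_one_vecMul, row, hVj]
  calc (V * A * V⁻¹) j = Pi.single j 1 ᵥ* (V * A * V⁻¹) := (single_one_vecMul j _).symm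
    _ = μ • (Pi.single j 1 ᵥ* (V * V⁻¹)) := by
      rw [← vecMul_vecMul, ← vecMul_vecMul, hVj', hwA, smul_vecMul, ← vecMul_vecMul, hVj']
    _ = Pi.single j μ := by
      rw [mul_nonsing_inv V hV, vecMul_one, ← Pi.single_smul, smul_eq_mul, mul_one]

theorem exists_units_conj_isUpperTriangular :
    ∀ {k : ℕ} (A : Matrix (Fin k) (Fin k) K), ∃ U : (Matrix (Fin k) (Fin k) K)ˣ,
      (U * A * U⁻¹ : Matrix (Fin k) (Fin k) K).IsUpperTriangular
  | 0, _ => ⟨1, fun i => i.elim0⟩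
  | k + 1, A => by
    obtain ⟨V, μ, hV⟩ := exists_units_conj_row_eq_single A (Fin.last k)
    let φ := reindexAlgEquiv K K (finSumFinEquiv : Fin k ⊕ Fin 1 ≃ Fin (k + 1))
    set C := φ.symm (V * A * V⁻¹ : Matrix (Fin (k + 1)) (Fin (k + 1)) K) with hCdef
    have hC : C.toBlocks₂₁ = 0 := by
      ext i j
      rw [Fin.fin_one_eq_zero i]
      exact (congrFun hV (Fin.castSucc j)).trans (Pi.single_eq_of_ne (Fin.castSucc_lt_last j).ne _)
    obtain ⟨U', hU'⟩ := exists_units_conj_isUpperTriangular C.toBlocks₁₁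
    obtain ⟨W, hW⟩ := exists_units_conj_blockTriangular_of_toBlocks₂₁_eq_zero hC hU'
      (V := 1) fun i j h => absurd h (by simp [Subsingleton.elim i j])
    let U := Units.map φ.toMonoidHom W * V
    refine ⟨U, ?_⟩
    have hconj : (U * A * U⁻¹ : Matrix (Fin (k + 1)) (Fin (k + 1)) K) =
        φ (W * C * W⁻¹ : Matrix (Fin k ⊕ Fin 1) (Fin k ⊕ Fin 1) K) := by
      simp [U, hCdef, mul_assoc]
    rw [hconj]
    have := hW.submatrix (f := finSumFinEquiv.symm)
    rwa [Equiv.self_comp_symm] at this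

end Schur

section KroneckerEval

variable [Fintype m] [DecidableEq m] [Fintype n] [DecidableEq n] {p q : ℕ}

def kroneckerEval [CommSemiring R] (c : Fin (p + 1) → Fin (q + 1) → R) (A : Matrix m m R)
    (B : Matrix n n R) : Matrix (m × n) (m × n) R :=
  ∑ i : Fin (p + 1), ∑ j : Fin (q + 1), c i j • ((A ^ (i : ℕ)) ⊗ₖ (B ^ (j : ℕ)))

theorem kroneckerEval_units_conj [CommSemiring R] (c : Fin (p + 1) → Fin (q + 1) → R)
    (A : Matrix m m R) (B : Matrix n n R) (U : (Matrix m m R)ˣ) (V : (Matrix n n R)ˣ) :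
    kroneckerEval c (U * A * U⁻¹ : Matrix m m R) (V * B * V⁻¹ : Matrix n n R) =
      ((U : Matrix m m R) ⊗ₖ (V : Matrix n n R)) * kroneckerEval c A B *
        ((↑U⁻¹ : Matrix m m R) ⊗ₖ (↑V⁻¹ : Matrix n n R)) := by
  simp only [kroneckerEval, Finset.mul_sum, Finset.sum_mul, Units.conj_pow, Matrix.mul_smul,
    Matrix.smul_mul, mul_kronecker_mul]

theorem charpoly_kroneckerEval_units_conj [CommRing R] (c : Fin (p + 1) → Fin (q + 1) → R)
    (A : Matrix m m R) (B : Matrix n n R) (U : (Matrix m m R)ˣ) (V : (Matrix n n R)ˣ) :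
    (kroneckerEval c (U * A * U⁻¹ : Matrix m m R) (V * B * V⁻¹ : Matrix n n R)).charpoly =
      (kroneckerEval c A B).charpoly := by
  rw [kroneckerEval_units_conj, charpoly_mul_mul_of_mul_eq_one]
  rw [← mul_kronecker_mul, U.inv_mul, V.inv_mul, one_kronecker_one]

variable [LinearOrder m] [LinearOrder n] {A : Matrix m m R} {B : Matrix n n R}

theorem IsUpperTriangular.kroneckerEval_blockTriangular [CommSemiring R]
    (hA : A.IsUpperTriangular) (hB : B.IsUpperTriangular) (c : Fin (p + 1) → Fin (q + 1) → R) :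
    (kroneckerEval c A B).BlockTriangular toLex :=
  show kroneckerEval c A B ∈ blockTriangularSubalgebra R R toLex from
    Subalgebra.sum_mem _ fun i _ => Subalgebra.sum_mem _ fun j _ =>
      Subalgebra.smul_mem _ (IsUpperTriangular.kronecker (hA.pow i) (hB.pow j)) _

theorem IsUpperTriangular.kroneckerEval_apply_self [CommSemiring R]
    (hA : A.IsUpperTriangular) (hB : B.IsUpperTriangular) (c : Fin (p + 1) → Fin (q + 1) → R)
    (i : m) (j : n) :
    kroneckerEval c A B (i, j) (i, j) = bivariateEval c (A i i) (B j j) := by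
  simp [kroneckerEval, bivariateEval, sum_apply, hA.pow_apply_self, hB.pow_apply_self, mul_assoc]

theorem IsUpperTriangular.roots_charpoly_kroneckerEval [CommRing R] [IsDomain R]
    (hA : A.IsUpperTriangular) (hB : B.IsUpperTriangular) (c : Fin (p + 1) → Fin (q + 1) → R) :
    (kroneckerEval c A B).charpoly.roots =
      Finset.univ.val.map fun ij : m × n => bivariateEval c (A ij.1 ij.1) (B ij.2 ij.2) := by
  rw [(hA.kroneckerEval_blockTriangular hB c).roots_charpoly_of_injective toLex.injective]
  simp only [hA.kroneckerEval_apply_self hB]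

end KroneckerEval

end Matrix

/-- If `{λ_i}` and `{θ_j}` are the eigenvalues (with algebraic
multiplicity, over `ℂ`) of `A` and `B`, then the eigenvalues of
`P(A,B) = ∑ᵢⱼ cᵢⱼ (Aⁱ ⊗ Bʲ)` are exactly `P(λ_i, θ_j)`. -/
theorem stmt_2 (m n p q : ℕ)
    (A : Matrix (Fin m) (Fin m) ℂ) (B : Matrix (Fin n) (Fin n) ℂ)
    (c : Fin (p + 1) → Fin (q + 1) → ℂ)
    (lam : Fin m → ℂ) (th : Fin n → ℂ)
    (hA : A.charpoly.roots = Multiset.map lam Finset.univ.val)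
    (hB : B.charpoly.roots = Multiset.map th Finset.univ.val) :
    (∑ i : Fin (p + 1), ∑ j : Fin (q + 1),
        c i j • ((A ^ (i : ℕ)) ⊗ₖ (B ^ (j : ℕ)))).charpoly.roots
      = Multiset.map
          (fun ij : Fin m × Fin n => ∑ i : Fin (p + 1), ∑ j : Fin (q + 1),
            c i j * lam ij.1 ^ (i : ℕ) * th ij.2 ^ (j : ℕ))
          Finset.univ.val := by
  obtain ⟨U, hU⟩ := exists_units_conj_isUpperTriangular A
  obtain ⟨V, hV⟩ := exists_units_conj_isUpperTriangular B
  change (kroneckerEval c A B).charpoly.roots =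
    Finset.univ.val.map fun ij : Fin m × Fin n => bivariateEval c (lam ij.1) (th ij.2)
  rw [← charpoly_kroneckerEval_units_conj c A B U V, hU.roots_charpoly_kroneckerEval hV]
  exact Finset.univ_val_map_prod_congr _ (hU.roots_charpoly_of_units_conj.symm.trans hA)
    (hV.roots_charpoly_of_units_conj.symm.trans hB)
end

section
/- Let F: ℝ^n → ℝ be L-smooth and μ-strongly convex with minimizer value F*, and 0 < η < 1/L. Suppose the stochastic-gradient step w⁺ = w − η g satisfies E[g] = ∇F(w) and E‖g‖² ≤ σ² + 2μ(F(w) − F*) + 2μς for some σ², ς ≥ 0. Then E[F(w⁺)] − F* ≤ (1 − ημ)(F(w) − F*) + (η²L/2)(σ² + 2μς). -/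
/-!
Along the segment from `w` to `w + v`, a gradient that is `L`-Lipschitz makes `F` lie below its
quadratic model `F w + ⟪∇F w, v⟫ + (L/2)‖v‖²`. Applying this to `v = -ηg` and taking
expectations, unbiasedness of `g` turns the linear term into `-η‖∇F w‖²`. Strong convexity gives
the Polyak–Łojasiewicz bound `‖∇F w‖² ≥ 2μ(F w - F*)`, and `ηL ≤ 1` lets one half of
`η‖∇F w‖²` absorb the `η²Lμ(F w - F*)` contributed by the second-moment bound.
-/

open RealInnerProductSpace MeasureTheory

section Smooth

variable {E : Type*} [NormedAddCommGroup E] [InnerProductSpace ℝ E] [CompleteSpace E]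
  {F : E → ℝ} {F' : E → E}

theorem HasGradientAt.hasDerivAt_comp_add_smul {g w v : E} {t : ℝ}
    (h : HasGradientAt F g (w + t • v)) :
    HasDerivAt (fun s : ℝ => F (w + s • v)) ⟪g, v⟫ t := by
  have hline : HasDerivAt (fun s : ℝ => w + s • v) v t := by
    simpa using ((hasDerivAt_id t).smul_const v).const_add w
  exact h.hasFDerivAt.comp_hasDerivAt t hline

theorem apply_add_le_of_lipschitz_gradient (hgrad : ∀ w, HasGradientAt F (F' w) w) {L : ℝ}
    (hLip : ∀ w u, ‖F' w - F' u‖ ≤ L * ‖w - u‖) (w v : E) :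
    F (w + v) ≤ F w + ⟪F' w, v⟫ + L / 2 * ‖v‖ ^ 2 := by
  set χ : ℝ → ℝ := fun t => F (w + t • v) - t * ⟪F' w, v⟫ - L / 2 * t ^ 2 * ‖v‖ ^ 2
  have hχ' : ∀ t, HasDerivAt χ (⟪F' (w + t • v) - F' w, v⟫ - L * t * ‖v‖ ^ 2) t := by
    intro t
    have := (((hgrad (w + t • v)).hasDerivAt_comp_add_smul.sub
      ((hasDerivAt_id t).mul_const ⟪F' w, v⟫)).sub
      (((hasDerivAt_pow 2 t).const_mul (L / 2)).mul_const (‖v‖ ^ 2)))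
    refine this.congr_deriv ?_
    rw [inner_sub_left]
    ring
  have hanti : AntitoneOn χ (Set.Ici 0) := by
    refine antitoneOn_of_hasDerivWithinAt_nonpos (convex_Ici 0)
      (fun t _ => (hχ' t).continuousAt.continuousWithinAt)
      (fun t _ => (hχ' t).hasDerivWithinAt) fun t ht => ?_
    rw [interior_Ici] at ht
    have hgrad_diff : ‖F' (w + t • v) - F' w‖ ≤ L * (t * ‖v‖) := by
      simpa [norm_smul, abs_of_pos ht.out] using hLip (w + t • v) w
    calc ⟪F' (w + t • v) - F' w, v⟫ - L * t * ‖v‖ ^ 2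
        ≤ ‖F' (w + t • v) - F' w‖ * ‖v‖ - L * t * ‖v‖ ^ 2 := by
          gcongr; exact real_inner_le_norm _ _
      _ ≤ 0 := by nlinarith [mul_le_mul_of_nonneg_right hgrad_diff (norm_nonneg v)]
  have := hanti Set.self_mem_Ici (zero_le_one' ℝ) zero_le_one
  simp only [χ, one_smul, zero_smul, add_zero] at this
  linarith

theorem integral_apply_sub_smul_le_of_lipschitz_gradient
    (hgrad : ∀ w, HasGradientAt F (F' w) w) {L : ℝ}
    (hLip : ∀ w u, ‖F' w - F' u‖ ≤ L * ‖w - u‖) {Ω : Type*} [MeasurableSpace Ω]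
    {P : Measure Ω} [IsProbabilityMeasure P] {g : Ω → E} (hg : Integrable g P)
    (hg_sq : Integrable (fun ω => ‖g ω‖ ^ 2) P) (w : E) (η : ℝ)
    (hF : Integrable (fun ω => F (w - η • g ω)) P) :
    ∫ ω, F (w - η • g ω) ∂P
      ≤ F w - η * ⟪F' w, ∫ ω, g ω ∂P⟫ + η ^ 2 * L / 2 * ∫ ω, ‖g ω‖ ^ 2 ∂P := by
  have hstep : ∀ ω, F (w - η • g ω) ≤ F w - η * ⟪F' w, g ω⟫ + η ^ 2 * L / 2 * ‖g ω‖ ^ 2 := by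
    intro ω
    have := apply_add_le_of_lipschitz_gradient hgrad hLip w (-(η • g ω))
    rw [← sub_eq_add_neg, inner_neg_right, real_inner_smul_right, norm_neg, norm_smul,
      Real.norm_eq_abs, mul_pow, sq_abs] at this
    linarith
  have hinner : Integrable (fun ω => η * ⟪F' w, g ω⟫) P :=
    ((innerSL ℝ (F' w)).integrable_comp hg).const_mul η
  have hlin : Integrable (fun ω => F w - η * ⟪F' w, g ω⟫) P := (integrable_const _).sub hinner
  calc ∫ ω, F (w - η • g ω) ∂P
      ≤ ∫ ω, (F w - η * ⟪F' w, g ω⟫ + η ^ 2 * L / 2 * ‖g ω‖ ^ 2) ∂P :=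
        integral_mono hF (hlin.add (hg_sq.const_mul _)) hstep
    _ = F w - η * ⟪F' w, ∫ ω, g ω ∂P⟫ + η ^ 2 * L / 2 * ∫ ω, ‖g ω‖ ^ 2 ∂P := by
        rw [integral_add hlin (hg_sq.const_mul _), integral_sub (integrable_const _) hinner,
          integral_const, integral_const_mul, integral_const_mul, integral_inner hg]
        simp

end Smooth

theorem two_mul_sub_le_norm_sq_of_add_inner_add_le {E : Type*} [NormedAddCommGroup E]
    [InnerProductSpace ℝ E] {μ a b : ℝ} (hμ : 0 ≤ μ) {g d : E}
    (h : a + ⟪g, d⟫ + μ / 2 * ‖d‖ ^ 2 ≤ b) : 2 * μ * (a - b) ≤ ‖g‖ ^ 2 := by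
  have hsq : 0 ≤ ‖g + μ • d‖ ^ 2 := sq_nonneg _
  rw [norm_add_sq_real, norm_smul, real_inner_smul_right, Real.norm_eq_abs, abs_of_nonneg hμ] at hsq
  nlinarith

theorem stmt_14_general (n : ℕ) (F : EuclideanSpace ℝ (Fin n) → ℝ)
    (F' : EuclideanSpace ℝ (Fin n) → EuclideanSpace ℝ (Fin n))
    (hgrad : ∀ w, HasGradientAt F (F' w) w)
    (L μ : ℝ) (hL : 0 < L) (hμ : 0 < μ)
    (hLip : ∀ w u, ‖F' w - F' u‖ ≤ L * ‖w - u‖)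
    (hsc : ∀ w u, F u ≥ F w + ⟪F' w, u - w⟫ + μ / 2 * ‖u - w‖ ^ 2)
    (Fstar : ℝ) (hmin : ∀ w, Fstar ≤ F w) (hatt : ∃ w, F w = Fstar)
    (η : ℝ) (hη : 0 < η) (hηL : η < 1 / L)
    (σ2 ς : ℝ)
    (Ω : Type*) [MeasureSpace Ω] (P : Measure Ω) [IsProbabilityMeasure P]
    (g : Ω → EuclideanSpace ℝ (Fin n))
    (hg_int : Integrable g P)
    (hg_sq_int : Integrable (fun ω => ‖g ω‖ ^ 2) P)
    (w : EuclideanSpace ℝ (Fin n))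
    (hF_int : Integrable (fun ω => F (w - η • g ω)) P)
    (hmean : ∫ ω, g ω ∂P = F' w)
    (hvar : ∫ ω, ‖g ω‖ ^ 2 ∂P ≤ σ2 + 2 * μ * (F w - Fstar) + 2 * μ * ς) :
    (∫ ω, F (w - η • g ω) ∂P) - Fstar
      ≤ (1 - η * μ) * (F w - Fstar) + η ^ 2 * L / 2 * (σ2 + 2 * μ * ς) := by
  have hdescent := integral_apply_sub_smul_le_of_lipschitz_gradient hgrad hLip hg_int hg_sq_int
    w η hF_int
  rw [hmean, real_inner_self_eq_norm_sq] at hdescent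
  obtain ⟨wstar, hwstar⟩ := hatt
  have hPL : 2 * μ * (F w - Fstar) ≤ ‖F' w‖ ^ 2 :=
    hwstar ▸ two_mul_sub_le_norm_sq_of_add_inner_add_le hμ.le (hsc w wstar)
  have hgap : 0 ≤ F w - Fstar := sub_nonneg.mpr (hmin w)
  have hηL' : η * L ≤ 1 := ((lt_div_iff₀ hL).mp hηL).le
  nlinarith [mul_le_mul_of_nonneg_left hvar (by positivity : 0 ≤ η ^ 2 * L / 2),
    mul_le_mul_of_nonneg_left hPL hη.le,
    mul_le_mul_of_nonneg_right hηL' (by positivity : 0 ≤ η * μ * (F w - Fstar))]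

/-- one stochastic-gradient step on an `L`-smooth, `μ`-strongly
convex `F` with `0 < η < 1/L`: if `E[g] = ∇F(w)` and
`E‖g‖² ≤ σ² + 2μ(F(w) - F*) + 2μς`, then
`E[F(w - ηg)] - F* ≤ (1 - ημ)(F(w) - F*) + (η²L/2)(σ² + 2μς)`. -/
theorem stmt_14 (n : ℕ) (F : EuclideanSpace ℝ (Fin n) → ℝ)
    (F' : EuclideanSpace ℝ (Fin n) → EuclideanSpace ℝ (Fin n))
    (hgrad : ∀ w, HasGradientAt F (F' w) w)
    (L μ : ℝ) (hL : 0 < L) (hμ : 0 < μ)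
    (hLip : ∀ w u, ‖F' w - F' u‖ ≤ L * ‖w - u‖)
    (hsc : ∀ w u, F u ≥ F w + ⟪F' w, u - w⟫ + μ / 2 * ‖u - w‖ ^ 2)
    (Fstar : ℝ) (hmin : ∀ w, Fstar ≤ F w) (hatt : ∃ w, F w = Fstar)
    (η : ℝ) (hη : 0 < η) (hηL : η < 1 / L)
    (σ2 ς : ℝ) (hσ2 : 0 ≤ σ2) (hς : 0 ≤ ς)
    (Ω : Type*) [MeasureSpace Ω] (P : Measure Ω) [IsProbabilityMeasure P]
    (g : Ω → EuclideanSpace ℝ (Fin n))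
    (hg_int : Integrable g P)
    (hg_sq_int : Integrable (fun ω => ‖g ω‖ ^ 2) P)
    (w : EuclideanSpace ℝ (Fin n))
    (hF_int : Integrable (fun ω => F (w - η • g ω)) P)
    (hmean : ∫ ω, g ω ∂P = F' w)
    (hvar : ∫ ω, ‖g ω‖ ^ 2 ∂P ≤ σ2 + 2 * μ * (F w - Fstar) + 2 * μ * ς) :
    (∫ ω, F (w - η • g ω) ∂P) - Fstar
      ≤ (1 - η * μ) * (F w - Fstar) + η ^ 2 * L / 2 * (σ2 + 2 * μ * ς) :=
  stmt_14_general n F F' hgrad L μ hL hμ hLip hsc Fstar hmin hatt η hη hηL σ2 ς Ω P g hg_int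
    hg_sq_int w hF_int hmean hvar
end
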